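/- Let F = ℂ⟨α, β⟩ with the degree grading giving both generators degree 1, and let ℤ/2 act by swapping α and β. Fix k > 1. Then no element w* = w + w^γ with deg(w) = k+1 can be written as a ℂ-linear combination of products w₁* w₂* with deg(w₁) + deg(w₂) = k+1 and deg(wᵢ) > 0. -/

import Mathlib

/-- The letter-swap on words. -/
def swapWord : FreeMonoid (Fin 2) →* FreeMonoid (Fin 2) :=
  FreeMonoid.map fun i => 1 - i

/-- Interpretation of a word as a product of generators of `ℂ⟨α, β⟩`. -/
noncomputable def wordToAlg : FreeMonoid (Fin 2) →* FreeAlgebra ℂ (Fin 2) :=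
  FreeMonoid.lift (FreeAlgebra.ι ℂ)

/-- `w* = w + w^γ`. -/
noncomputable def wStar (w : FreeMonoid (Fin 2)) : FreeAlgebra ℂ (Fin 2) :=
  wordToAlg w + wordToAlg (swapWord w)

/-!
Let `ε(α) = 1` and `ε(β) = -1`, and consider the linear functional `φ` on `ℂ⟨α, β⟩` sending a
nonempty word `u` to `ε(first letter of u) · ε(last letter of u)`. Since the swap negates `ε`,
`φ(w*) = 2 φ(w) ≠ 0`. For nonempty `u, v`, the first letter of a product of `u` or `u^γ` with `v`
or `v^γ` comes from the left factor and the last from the right one, so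
`φ(u* v*) = (ε(first u) + ε(first u^γ)) (ε(last v) + ε(last v^γ)) = 0`.
Hence `φ` kills the span of the products `u* v*` but not `w*`.
-/

open FreeAlgebra

theorem FreeAlgebra.basisFreeMonoid_apply (R X : Type*) [CommSemiring R] (u : FreeMonoid X) :
    basisFreeMonoid R X u = FreeMonoid.lift (ι R) u := by
  simp [basisFreeMonoid, equivMonoidAlgebraFreeMonoid]

theorem toList_swapWord (u : FreeMonoid (Fin 2)) :
    (swapWord u).toList = u.toList.map (1 - ·) :=
  FreeMonoid.toList_map _ u

theorem swapWord_ne_one {u : FreeMonoid (Fin 2)} (hu : u ≠ 1) : swapWord u ≠ 1 := by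
  intro h
  have h' := congrArg FreeMonoid.toList h
  rw [toList_swapWord] at h'
  exact hu (FreeMonoid.toList.injective (List.map_eq_nil_iff.mp h'))

def letterSign (i : Fin 2) : ℂ := if i = 0 then 1 else -1

theorem letterSign_one_sub (i : Fin 2) : letterSign (1 - i) = -letterSign i := by
  fin_cases i <;> norm_num [letterSign]

theorem letterSign_ne_zero (i : Fin 2) : letterSign i ≠ 0 := by
  fin_cases i <;> norm_num [letterSign]

def firstSign (u : FreeMonoid (Fin 2)) : ℂ := u.toList.head?.elim 0 letterSign

def lastSign (u : FreeMonoid (Fin 2)) : ℂ := u.toList.getLast?.elim 0 letterSign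

theorem firstSign_mul {u : FreeMonoid (Fin 2)} (hu : u ≠ 1) (v : FreeMonoid (Fin 2)) :
    firstSign (u * v) = firstSign u := by
  rw [firstSign, FreeMonoid.toList_mul,
    List.head?_append_of_ne_nil _ (FreeMonoid.toList.injective.ne hu), firstSign]

theorem lastSign_mul (u : FreeMonoid (Fin 2)) {v : FreeMonoid (Fin 2)} (hv : v ≠ 1) :
    lastSign (u * v) = lastSign v := by
  rw [lastSign, FreeMonoid.toList_mul,
    List.getLast?_append_of_ne_nil _ (FreeMonoid.toList.injective.ne hv), lastSign]

theorem firstSign_swapWord (u : FreeMonoid (Fin 2)) : firstSign (swapWord u) = -firstSign u := by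
  cases h : u.toList.head? <;>
    simp [firstSign, toList_swapWord, List.head?_map, h, letterSign_one_sub]

theorem lastSign_swapWord (u : FreeMonoid (Fin 2)) : lastSign (swapWord u) = -lastSign u := by
  cases h : u.toList.getLast? <;>
    simp [lastSign, toList_swapWord, List.getLast?_map, h, letterSign_one_sub]

theorem firstSign_ne_zero {u : FreeMonoid (Fin 2)} (hu : u ≠ 1) : firstSign u ≠ 0 := by
  obtain ⟨a, l, h⟩ := List.exists_cons_of_ne_nil (FreeMonoid.toList.injective.ne hu)
  simp [firstSign, h, letterSign_ne_zero]

theorem lastSign_ne_zero {u : FreeMonoid (Fin 2)} (hu : u ≠ 1) : lastSign u ≠ 0 := by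
  obtain ⟨l, a, h⟩ :=
    (List.eq_nil_or_concat u.toList).resolve_left (FreeMonoid.toList.injective.ne hu)
  simp [lastSign, h, letterSign_ne_zero]

noncomputable def endSignFunctional : FreeAlgebra ℂ (Fin 2) →ₗ[ℂ] ℂ :=
  (basisFreeMonoid ℂ (Fin 2)).constr ℂ fun u => firstSign u * lastSign u

theorem endSignFunctional_wordToAlg (u : FreeMonoid (Fin 2)) :
    endSignFunctional (wordToAlg u) = firstSign u * lastSign u := by
  rw [endSignFunctional, wordToAlg, ← basisFreeMonoid_apply, Module.Basis.constr_basis]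

theorem endSignFunctional_wordToAlg_mul {u v : FreeMonoid (Fin 2)} (hu : u ≠ 1) (hv : v ≠ 1) :
    endSignFunctional (wordToAlg u * wordToAlg v) = firstSign u * lastSign v := by
  rw [← map_mul, endSignFunctional_wordToAlg, firstSign_mul hu, lastSign_mul _ hv]

theorem endSignFunctional_wStar (w : FreeMonoid (Fin 2)) :
    endSignFunctional (wStar w) = 2 * firstSign w * lastSign w := by
  rw [wStar, map_add, endSignFunctional_wordToAlg, endSignFunctional_wordToAlg,
    firstSign_swapWord, lastSign_swapWord]
  ring

theorem endSignFunctional_wStar_mul_wStar {u v : FreeMonoid (Fin 2)} (hu : u ≠ 1) (hv : v ≠ 1) :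
    endSignFunctional (wStar u * wStar v) = 0 := by
  simp only [wStar, add_mul, mul_add, map_add]
  rw [endSignFunctional_wordToAlg_mul hu hv, endSignFunctional_wordToAlg_mul hu (swapWord_ne_one hv),
    endSignFunctional_wordToAlg_mul (swapWord_ne_one hu) hv,
    endSignFunctional_wordToAlg_mul (swapWord_ne_one hu) (swapWord_ne_one hv),
    firstSign_swapWord, lastSign_swapWord]
  ring

theorem wStar_notMem_span_wStar_mul_wStar {w : FreeMonoid (Fin 2)} (hw : w ≠ 1) :
    wStar w ∉ Submodule.span ℂ {x | ∃ u v : FreeMonoid (Fin 2), u ≠ 1 ∧ v ≠ 1 ∧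
      x = wStar u * wStar v} := by
  intro hmem
  have hker : Submodule.span ℂ {x | ∃ u v : FreeMonoid (Fin 2), u ≠ 1 ∧ v ≠ 1 ∧
      x = wStar u * wStar v} ≤ LinearMap.ker endSignFunctional := by
    rw [Submodule.span_le]
    rintro _ ⟨u, v, hu, hv, rfl⟩
    exact endSignFunctional_wStar_mul_wStar hu hv
  have hzero := LinearMap.mem_ker.mp (hker hmem)
  rw [endSignFunctional_wStar] at hzero
  exact mul_ne_zero (mul_ne_zero two_ne_zero (firstSign_ne_zero hw)) (lastSign_ne_zero hw) hzero

theorem stmt2_general (k : ℕ) (w : FreeMonoid (Fin 2))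
    (hw : (FreeMonoid.toList w).length = k + 1) :
    wStar w ∉ Submodule.span ℂ
      {x : FreeAlgebra ℂ (Fin 2) | ∃ w₁ w₂ : FreeMonoid (Fin 2),
        0 < (FreeMonoid.toList w₁).length ∧ 0 < (FreeMonoid.toList w₂).length ∧
        (FreeMonoid.toList w₁).length + (FreeMonoid.toList w₂).length = k + 1 ∧
        x = wStar w₁ * wStar w₂} := by
  refine fun hmem => wStar_notMem_span_wStar_mul_wStar (w := w) ?_ (Submodule.span_mono ?_ hmem)
  · exact FreeMonoid.length_eq_zero.not.mp (hw.trans_ne k.succ_ne_zero)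
  · rintro _ ⟨u, v, hu, hv, -, rfl⟩
    exact ⟨u, v, FreeMonoid.length_eq_zero.not.mp hu.ne', FreeMonoid.length_eq_zero.not.mp hv.ne',
      rfl⟩

/-- For `k > 1`, no element `w* = w + w^γ` with `deg w = k + 1` is a ℂ-linear combination of
products `w₁* w₂*` with `deg w₁ + deg w₂ = k + 1` and both degrees positive. -/
theorem stmt2 (k : ℕ) (hk : 1 < k) (w : FreeMonoid (Fin 2))
    (hw : (FreeMonoid.toList w).length = k + 1) :
    wStar w ∉ Submodule.span ℂ
      {x : FreeAlgebra ℂ (Fin 2) | ∃ w₁ w₂ : FreeMonoid (Fin 2),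
        0 < (FreeMonoid.toList w₁).length ∧ 0 < (FreeMonoid.toList w₂).length ∧
        (FreeMonoid.toList w₁).length + (FreeMonoid.toList w₂).length = k + 1 ∧
        x = wStar w₁ * wStar w₂} :=
  stmt2_general k w hw
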